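/- arXiv:1703.00990 — 2 statements merged into one kernel-verified Lean document; each statement's English description precedes it below -/
import Mathlib

section
/- If r is an odd positive integer, then r^3 divides \sum_{d | r} \mu(r/d) \binom{3d-1}{d-1}. -/
/-!
Fix a prime `p ∣ r`, write `r = p ^ a * m` with `p ∤ m`, and let `f d = C(3d - 1, d - 1)`. Since
`μ (p ^ k) = 0` for `k ≥ 2`, the Möbius sum regroups as
`∑_{e ∣ m} μ (m / e) (f (p ^ a e) - f (p ^ (a - 1) e))`, so it suffices that
`p ^ (3c) ∣ f (N p) - f N` whenever `p ^ c ∣ N p` and `p` is odd.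

Put `M = N p` and let `S` be the integers in `[1, M]` prime to `p`, `J = ∏_S j` and
`u j = J / j`. Splitting factorials into multiples of `p` and the rest gives
`f M · J = f N · ∏_S (2M + j)`, so one needs `∏_S (2M + j) ≡ J (mod p ^ (3c))`. Expanding
`∏_S (x + j)` to second order, the coefficients are `A₁ = ∑ u j` and `A₂` with
`2 J A₂ = A₁² - ∑ (u j)²`. The involution `j ↦ M - j` of `S` gives the exact identity
`2 J A₁ = M ∑ u j · u (M - j)` and the congruence `u j + u (M - j) ≡ 0 (mod p ^ c)`; with
`3 ∑ (u j)² ≡ 0 (mod p ^ c)`, which holds because `x ↦ 2x` permutes the units mod `p ^ c`, the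
first- and second-order terms vanish modulo `p ^ (3c)`.
-/

open Finset ArithmeticFunction
open scoped Nat

def cofactor {ι R : Type*} [CommMonoid R] [DecidableEq ι] (s : Finset ι) (a : ι → R) (i : ι) :
    R :=
  ∏ k ∈ s.erase i, a k

section Cofactor

variable {ι R : Type*} [CommRing R] [DecidableEq ι]

theorem mul_cofactor {s : Finset ι} {i : ι} (hi : i ∈ s) (a : ι → R) :
    a i * cofactor s a i = ∏ k ∈ s, a k :=
  mul_prod_erase s a hi

theorem sum_cofactor_insert_pow {s : Finset ι} {b : ι} (hb : b ∉ s) (a : ι → R) (n : ℕ) :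
    ∑ i ∈ insert b s, cofactor (insert b s) a i ^ n
      = (∏ k ∈ s, a k) ^ n + a b ^ n * ∑ i ∈ s, cofactor s a i ^ n := by
  rw [sum_insert hb, cofactor, erase_insert hb, mul_sum]
  congr 1
  refine sum_congr rfl fun i hi => ?_
  rw [cofactor, cofactor, erase_insert_of_ne (ne_of_mem_of_not_mem hi hb).symm,
    prod_insert fun h => hb (mem_of_mem_erase h), mul_pow]

theorem exists_prod_add_eq (s : Finset ι) (a : ι → R) (x : R) :
    ∃ A₂ E : R, ∏ i ∈ s, (x + a i)
        = ∏ i ∈ s, a i + (∑ i ∈ s, cofactor s a i) * x + A₂ * x ^ 2 + E * x ^ 3 ∧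
      2 * (∏ i ∈ s, a i) * A₂ = (∑ i ∈ s, cofactor s a i) ^ 2 - ∑ i ∈ s, cofactor s a i ^ 2 := by
  induction s using Finset.induction_on with
  | empty => exact ⟨0, 0, by simp⟩
  | insert b s hb ih =>
    obtain ⟨A₂, E, hprod, hA₂⟩ := ih
    have h₁ := sum_cofactor_insert_pow hb a 1
    have h₂ := sum_cofactor_insert_pow hb a 2
    simp only [pow_one] at h₁
    refine ⟨∑ i ∈ s, cofactor s a i + a b * A₂, A₂ + a b * E + E * x, ?_, ?_⟩
    · rw [prod_insert hb, prod_insert hb, hprod, h₁]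
      ring
    · rw [prod_insert hb, h₁, h₂]
      linear_combination a b ^ 2 * hA₂

end Cofactor

theorem three_mul_sum_units_sq {R : Type*} [CommRing R] [Fintype Rˣ] (h2 : IsUnit (2 : R)) :
    3 * ∑ u : Rˣ, (u : R) ^ 2 = 0 := by
  -- `u ↦ 2u` permutes the units, so the sum `s` satisfies `4 s = s`.
  have h := Equiv.sum_comp (Equiv.mulLeft h2.unit) fun u : Rˣ => (u : R) ^ 2
  simp only [Equiv.coe_mulLeft, Units.val_mul, IsUnit.unit_spec, mul_pow, ← mul_sum] at h
  linear_combination h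

theorem Function.Periodic.sum_range_mul {A : Type*} [AddCommMonoid A] {f : ℕ → A} {q : ℕ}
    (hf : Function.Periodic f q) (K : ℕ) :
    ∑ j ∈ range (q * K), f j = K • ∑ j ∈ range q, f j := by
  induction K with
  | zero => simp
  | succ K ih =>
    rw [mul_add_one, sum_range_add, ih, succ_nsmul]
    congr 1
    exact sum_congr rfl fun j _ => by simpa [add_comm, mul_comm] using hf.nat_mul K j

theorem sum_divisors_prime_pow_mul {A : Type*} [AddCommMonoid A] {p m : ℕ} (a : ℕ)
    (hp : p.Prime) (hpm : ¬ p ∣ m) (F : ℕ → A) :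
    ∑ d ∈ (p ^ a * m).divisors, F d = ∑ i ∈ range (a + 1), ∑ e ∈ m.divisors, F (p ^ i * e) := by
  have hcop : (p ^ a).Coprime m := ((Nat.Prime.coprime_iff_not_dvd hp).2 hpm).pow_left a
  rw [hcop.divisors_mul, sum_map]
  refine (sum_attach _ (fun x : ℕ × ℕ => F (x.1 * x.2))).trans ?_
  rw [sum_product, Nat.sum_divisors_prime_pow hp]

theorem moebius_prime_pow_mul_div {p a m i e : ℕ} (hp : p.Prime) (hpm : ¬ p ∣ m) (hi : i ≤ a)
    (he : e ∣ m) : moebius (p ^ a * m / (p ^ i * e)) = moebius (p ^ (a - i)) * moebius (m / e) := by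
  rw [Nat.mul_div_mul_comm (pow_dvd_pow p hi) he, Nat.pow_div hi hp.pos]
  refine isMultiplicative_moebius.map_mul_of_coprime (Nat.Coprime.pow_left _ ?_)
  exact (Nat.Prime.coprime_iff_not_dvd hp).2 fun h => hpm (h.trans (Nat.div_dvd_of_dvd he))

theorem dvd_sum_moebius_mul_of_dvd_sub {f : ℕ → ℤ} {p a m : ℕ} {x : ℤ} (hp : p.Prime)
    (ha : a ≠ 0) (hpm : ¬ p ∣ m) (hf : ∀ e ∈ m.divisors, x ∣ f (p ^ a * e) - f (p ^ (a - 1) * e)) :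
    x ∣ ∑ d ∈ (p ^ a * m).divisors, moebius (p ^ a * m / d) * f d := by
  obtain ⟨b, rfl⟩ := Nat.exists_eq_add_one_of_ne_zero ha
  rw [sum_divisors_prime_pow_mul _ hp hpm, sum_range_succ, sum_range_succ]
  simp only [Nat.add_sub_cancel] at hf
  have hvanish : ∀ i ∈ range b,
      ∑ e ∈ m.divisors, moebius (p ^ (b + 1) * m / (p ^ i * e)) * f (p ^ i * e) = 0 := by
    intro i hi
    refine sum_eq_zero fun e he => ?_
    rw [mem_range] at hi
    rw [moebius_prime_pow_mul_div hp hpm (by omega) (Nat.dvd_of_mem_divisors he),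
      moebius_apply_prime_pow hp (by omega), if_neg (by omega), zero_mul, zero_mul]
  rw [sum_eq_zero hvanish, zero_add, ← sum_add_distrib]
  refine dvd_sum fun e he => ?_
  have he' := Nat.dvd_of_mem_divisors he
  rw [moebius_prime_pow_mul_div hp hpm (by omega) he', moebius_prime_pow_mul_div hp hpm le_rfl he',
    Nat.add_sub_cancel_left, pow_one, moebius_apply_prime hp, Nat.sub_self, pow_zero,
    moebius_apply_one]
  convert (hf e he).mul_left (moebius (m / e)) using 1
  ring

def nonMultiples (p M : ℕ) : Finset ℕ := {j ∈ Ico 1 (M + 1) | ¬ p ∣ j}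

section nonMultiples

variable {p M j : ℕ}

theorem mem_nonMultiples : j ∈ nonMultiples p M ↔ (1 ≤ j ∧ j ≤ M) ∧ ¬ p ∣ j := by
  simp [nonMultiples]

theorem sub_mem_nonMultiples (hpM : p ∣ M) (hj : j ∈ nonMultiples p M) :
    M - j ∈ nonMultiples p M := by
  rw [mem_nonMultiples] at hj ⊢
  obtain ⟨⟨h1, h2⟩, hpj⟩ := hj
  have hjM : j ≠ M := by rintro rfl; exact hpj hpM
  refine ⟨⟨by omega, by omega⟩, fun hd => hpj ?_⟩
  simpa [Nat.sub_sub_self h2] using Nat.dvd_sub hpM hd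

theorem sum_nonMultiples_sub {A : Type*} [AddCommMonoid A] (hpM : p ∣ M) (f : ℕ → A) :
    ∑ j ∈ nonMultiples p M, f (M - j) = ∑ j ∈ nonMultiples p M, f j := by
  refine sum_nbij' (M - ·) (M - ·) (fun j hj => sub_mem_nonMultiples hpM hj)
    (fun j hj => sub_mem_nonMultiples hpM hj) (fun j hj => ?_) (fun j hj => ?_) fun _ _ => rfl <;>
  · have := (mem_nonMultiples.mp hj).1.2
    omega

theorem sum_nonMultiples_mul_of_periodic {A : Type*} [AddCommMonoid A] {q : ℕ} (hpq : p ∣ q)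
    {f : ℕ → A} (hf : Function.Periodic f q) (K : ℕ) :
    ∑ j ∈ nonMultiples p (q * K), f j = K • ∑ j ∈ nonMultiples p q, f j := by
  have hg : Function.Periodic (fun k => if ¬ p ∣ 1 + k then f (1 + k) else 0) q := fun k => by
    simp only [← add_assoc, hf (1 + k), Nat.dvd_add_left hpq]
  simp only [nonMultiples, sum_filter]
  rw [sum_Ico_eq_sum_range, sum_Ico_eq_sum_range, Nat.add_sub_cancel, Nat.add_sub_cancel]
  exact hg.sum_range_mul K

theorem coprime_pow_of_mem_nonMultiples (hp : p.Prime) (hj : j ∈ nonMultiples p M) (k : ℕ) :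
    (p ^ k).Coprime j :=
  ((Nat.Prime.coprime_iff_not_dvd hp).2 (mem_nonMultiples.1 hj).2).pow_left k

theorem sum_nonMultiples_prime_pow {A : Type*} [AddCommMonoid A] {c : ℕ} (hp : p.Prime)
    (hc : c ≠ 0) [NeZero (p ^ c)] (g : ZMod (p ^ c) → A) :
    ∑ j ∈ nonMultiples p (p ^ c), g j = ∑ u : (ZMod (p ^ c))ˣ, g u := by
  have hcop : ∀ j ∈ nonMultiples p (p ^ c), j.Coprime (p ^ c) := fun j hj =>
    (coprime_pow_of_mem_nonMultiples hp hj c).symm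
  have : Fact (1 < p ^ c) := ⟨Nat.one_lt_pow hc hp.one_lt⟩
  refine sum_bij' (fun j hj => ZMod.unitOfCoprime j (hcop j hj)) (fun u _ => (u : ZMod (p ^ c)).val)
    (fun _ _ => mem_univ _) (fun u _ => ?_) (fun j hj => ?_) (fun u _ => ?_) fun _ _ => rfl
  · have hval := ZMod.val_lt (u : ZMod (p ^ c))
    have hne : (u : ZMod (p ^ c)).val ≠ 0 := (ZMod.val_ne_zero _).2 u.ne_zero
    refine mem_nonMultiples.2 ⟨⟨by omega, by omega⟩, fun hd => ?_⟩
    exact hp.ne_one <| (Nat.Coprime.coprime_dvd_left hd (ZMod.val_coe_unit_coprime u)).eq_one_of_dvd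
      (dvd_pow_self p hc)
  · have hj' := mem_nonMultiples.1 hj
    have hjq : j ≠ p ^ c := fun h => hj'.2 (h ▸ dvd_pow_self p hc)
    exact ZMod.val_cast_of_lt (by omega)
  · exact Units.ext (ZMod.natCast_zmod_val _)

theorem isCoprime_pow_of_mem_nonMultiples (hp : p.Prime) (hj : j ∈ nonMultiples p M) (k : ℕ) :
    IsCoprime ((p : ℤ) ^ k) j := by
  exact_mod_cast Nat.isCoprime_iff_coprime.2 (coprime_pow_of_mem_nonMultiples hp hj k)

theorem isCoprime_pow_prod_nonMultiples (hp : p.Prime) (k : ℕ) :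
    IsCoprime ((p : ℤ) ^ k) (∏ j ∈ nonMultiples p M, (j : ℤ)) :=
  IsCoprime.prod_right fun _ hj => isCoprime_pow_of_mem_nonMultiples hp hj k

theorem prod_Ico_eq_prod_nonMultiples_mul {A : Type*} [CommMonoid A] (hp : 0 < p) (N : ℕ)
    (f : ℕ → A) :
    ∏ j ∈ Ico 1 (N * p + 1), f j
      = (∏ j ∈ nonMultiples p (N * p), f j) * ∏ t ∈ Ico 1 (N + 1), f (p * t) := by
  have hmult : {j ∈ Ico 1 (N * p + 1) | p ∣ j} = (Ico 1 (N + 1)).image (p * ·) := by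
    ext j
    simp only [mem_filter, mem_Ico, mem_image]
    constructor
    · rintro ⟨⟨h1, h2⟩, t, rfl⟩
      refine ⟨t, ⟨?_, ?_⟩, rfl⟩ <;> nlinarith
    · rintro ⟨t, ⟨h1, h2⟩, rfl⟩
      refine ⟨⟨?_, ?_⟩, dvd_mul_right p t⟩ <;> nlinarith
  rw [← prod_filter_not_mul_prod_filter (Ico 1 (N * p + 1)) (p ∣ ·), hmult,
    prod_image fun s _ t _ h => Nat.eq_of_mul_eq_mul_left hp h]
  rfl

end nonMultiples

theorem factorial_mul_choose_three_mul (L : ℕ) :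
    L ! * (3 * L).choose L = ∏ j ∈ Ico 1 (L + 1), (2 * L + j) := by
  rw [show 3 * L = 2 * L + L by ring, ← Nat.ascFactorial_eq_factorial_mul_choose,
    Nat.ascFactorial_eq_prod_range, prod_Ico_eq_prod_range, Nat.add_sub_cancel]
  simp only [add_assoc]

theorem choose_three_mul_mul_prod_nonMultiples {p : ℕ} (hp : 0 < p) (N : ℕ) :
    (3 * (N * p)).choose (N * p) * ∏ j ∈ nonMultiples p (N * p), j
      = (3 * N).choose N * ∏ j ∈ nonMultiples p (N * p), (2 * (N * p) + j) := by
  have hfact : (N * p)! = (∏ j ∈ nonMultiples p (N * p), j) * (p ^ N * N !) := by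
    rw [← prod_Ico_id_eq_factorial, prod_Ico_eq_prod_nonMultiples_mul hp, prod_mul_distrib,
      prod_const, Nat.card_Ico, Nat.add_sub_cancel, prod_Ico_id_eq_factorial]
  have hshift := factorial_mul_choose_three_mul (N * p)
  rw [prod_Ico_eq_prod_nonMultiples_mul hp] at hshift
  have hmul : ∏ t ∈ Ico 1 (N + 1), (2 * (N * p) + p * t) = p ^ N * (N ! * (3 * N).choose N) := by
    calc ∏ t ∈ Ico 1 (N + 1), (2 * (N * p) + p * t) = ∏ t ∈ Ico 1 (N + 1), p * (2 * N + t) :=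
          prod_congr rfl fun t _ => by ring
      _ = _ := by
        rw [prod_mul_distrib, prod_const, Nat.card_Ico, Nat.add_sub_cancel,
          factorial_mul_choose_three_mul]
  rw [hmul, hfact] at hshift
  have hpos : 0 < p ^ N * N ! := by positivity
  refine Nat.eq_of_mul_eq_mul_right hpos ?_
  linear_combination hshift

theorem choose_three_mul_eq {L : ℕ} (hL : L ≠ 0) :
    (3 * L).choose L = 3 * (3 * L - 1).choose (L - 1) := by
  obtain ⟨n, rfl⟩ := Nat.exists_eq_add_one_of_ne_zero hL
  have h := Nat.add_one_mul_choose_eq (3 * n + 2) n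
  rw [show 3 * (n + 1) - 1 = 3 * n + 2 by omega, Nat.add_sub_cancel,
    show 3 * (n + 1) = 3 * n + 2 + 1 by ring]
  refine Nat.eq_of_mul_eq_mul_right n.add_one_pos ?_
  rw [← h]
  ring

theorem isCoprime_prime_pow_two {p : ℕ} (hp : p.Prime) (hp2 : p ≠ 2) (k : ℕ) :
    IsCoprime ((p : ℤ) ^ k) 2 :=
  (Nat.isCoprime_iff_coprime.2 ((Nat.coprime_primes hp Nat.prime_two).2 hp2)).pow_left

section PrimePowerCongruences

variable {p M j : ℕ}

local notation "S" => nonMultiples p M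
local notation "u" => cofactor (nonMultiples p M) (Nat.cast : ℕ → ℤ)

theorem mul_cofactor_add_cofactor_sub (hpM : p ∣ M) (hj : j ∈ S) :
    (j : ℤ) * (u j + u (M - j)) = M * u (M - j) := by
  have h₁ := mul_cofactor hj (Nat.cast : ℕ → ℤ)
  have h₂ := mul_cofactor (sub_mem_nonMultiples hpM hj) (Nat.cast : ℕ → ℤ)
  rw [Nat.cast_sub (mem_nonMultiples.1 hj).1.2] at h₂
  linear_combination h₁ - h₂

theorem prod_mul_cofactor_add_cofactor_sub (hpM : p ∣ M) (hj : j ∈ S) :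
    (∏ i ∈ S, (i : ℤ)) * (u j + u (M - j)) = M * (u j * u (M - j)) := by
  have h₁ := mul_cofactor hj (Nat.cast : ℕ → ℤ)
  have h₂ := mul_cofactor (sub_mem_nonMultiples hpM hj) (Nat.cast : ℕ → ℤ)
  rw [Nat.cast_sub (mem_nonMultiples.1 hj).1.2] at h₂
  linear_combination (-u (M - j)) * h₁ - u j * h₂

theorem two_mul_sum_cofactor (hpM : p ∣ M) :
    2 * ∑ j ∈ S, u j = ∑ j ∈ S, (u j + u (M - j)) := by
  rw [sum_add_distrib, sum_nonMultiples_sub hpM u, two_mul]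

theorem two_mul_prod_mul_sum_cofactor (hpM : p ∣ M) :
    2 * (∏ i ∈ S, (i : ℤ)) * ∑ j ∈ S, u j = M * ∑ j ∈ S, u j * u (M - j) := by
  rw [mul_comm 2, mul_assoc, two_mul_sum_cofactor hpM, mul_sum, mul_sum]
  exact sum_congr rfl fun j hj => prod_mul_cofactor_add_cofactor_sub hpM hj

variable {c : ℕ} (hp : p.Prime) (hc : c ≠ 0) (hM : p ^ c ∣ M)
include hp hc hM

theorem pow_dvd_cofactor_add_cofactor_sub (hj : j ∈ S) : (p : ℤ) ^ c ∣ u j + u (M - j) := by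
  refine (isCoprime_pow_of_mem_nonMultiples hp hj c).dvd_of_dvd_mul_left ?_
  rw [mul_cofactor_add_cofactor_sub ((dvd_pow_self p hc).trans hM) hj]
  exact (show (p : ℤ) ^ c ∣ M by exact_mod_cast hM).mul_right _

theorem pow_dvd_sum_cofactor (hp2 : p ≠ 2) : (p : ℤ) ^ c ∣ ∑ j ∈ S, u j := by
  refine (isCoprime_prime_pow_two hp hp2 c).dvd_of_dvd_mul_left ?_
  rw [two_mul_sum_cofactor ((dvd_pow_self p hc).trans hM)]
  exact dvd_sum fun j hj => pow_dvd_cofactor_add_cofactor_sub hp hc hM hj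

theorem pow_dvd_sum_cofactor_mul_add_sum_sq :
    (p : ℤ) ^ c ∣ ∑ j ∈ S, u j * u (M - j) + ∑ j ∈ S, u j ^ 2 := by
  rw [← sum_add_distrib]
  refine dvd_sum fun j hj => ?_
  rw [sq, ← mul_add, add_comm]
  exact (pow_dvd_cofactor_add_cofactor_sub hp hc hM hj).mul_left _

theorem pow_dvd_three_mul_sum_cofactor_sq (hp2 : p ≠ 2) :
    (p : ℤ) ^ c ∣ 3 * ∑ j ∈ S, u j ^ 2 := by
  have : NeZero (p ^ c) := ⟨pow_ne_zero c hp.ne_zero⟩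
  suffices h : ((3 * ∑ j ∈ S, u j ^ 2 : ℤ) : ZMod (p ^ c)) = 0 by
    exact_mod_cast (ZMod.intCast_zmod_eq_zero_iff_dvd _ _).1 h
  have hu : ∀ j ∈ S,
      (u j : ZMod (p ^ c)) = (∏ i ∈ S, (i : ZMod (p ^ c))) * (j : ZMod (p ^ c))⁻¹ := by
    intro j hj
    have hunit : IsUnit (j : ZMod (p ^ c)) :=
      (ZMod.isUnit_iff_coprime j (p ^ c)).2 (coprime_pow_of_mem_nonMultiples hp hj c).symm
    have h := congrArg (Int.cast : ℤ → ZMod (p ^ c)) (mul_cofactor hj (Nat.cast : ℕ → ℤ))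
    push_cast at h
    rw [← h, mul_comm (j : ZMod (p ^ c)), mul_assoc, ZMod.mul_inv_of_unit _ hunit, mul_one]
  have hper : Function.Periodic (fun j : ℕ => ((j : ZMod (p ^ c))⁻¹) ^ 2) (p ^ c) := fun j => by
    simp
  have h2 : IsUnit (2 : ZMod (p ^ c)) := by
    exact_mod_cast (ZMod.isUnit_iff_coprime 2 (p ^ c)).2
      (((Nat.coprime_primes Nat.prime_two hp).2 (Ne.symm hp2)).pow_right c)
  have hinv : ∑ v : (ZMod (p ^ c))ˣ, ((v : ZMod (p ^ c))⁻¹) ^ 2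
      = ∑ v : (ZMod (p ^ c))ˣ, (v : ZMod (p ^ c)) ^ 2 :=
    Fintype.sum_equiv (Equiv.inv _) _ _ fun v => by simp [ZMod.inv_coe_unit]
  push_cast
  rw [sum_congr rfl fun j hj => by rw [hu j hj]]
  simp_rw [mul_pow, ← mul_sum]
  generalize ∏ i ∈ S, (i : ZMod (p ^ c)) = J
  obtain ⟨K, rfl⟩ := hM
  rw [sum_nonMultiples_mul_of_periodic (dvd_pow_self p hc) hper K,
    sum_nonMultiples_prime_pow hp hc fun x => (x⁻¹) ^ 2, hinv, nsmul_eq_mul]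
  linear_combination J ^ 2 * (K : ZMod (p ^ c)) * three_mul_sum_units_sq h2

theorem pow_dvd_prod_add_two_mul_sub_prod (hp2 : p ≠ 2) :
    (p : ℤ) ^ (3 * c) ∣ ∏ j ∈ S, (2 * M + (j : ℤ)) - ∏ j ∈ S, (j : ℤ) := by
  obtain ⟨A₂, E, hexp, hA₂⟩ := exists_prod_add_eq S (Nat.cast : ℕ → ℤ) (2 * M)
  have hpair := two_mul_prod_mul_sum_cofactor ((dvd_pow_self p hc).trans hM)
  have hA₁ := pow_dvd_sum_cofactor hp hc hM hp2
  have hB := pow_dvd_sum_cofactor_mul_add_sum_sq hp hc hM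
  have hT := pow_dvd_three_mul_sum_cofactor_sq hp hc hM hp2
  have hM' : (p : ℤ) ^ c ∣ M := by exact_mod_cast hM
  set J := ∏ j ∈ S, (j : ℤ)
  set A₁ := ∑ j ∈ S, u j
  set B := ∑ j ∈ S, u j * u (M - j)
  set T := ∑ j ∈ S, u j ^ 2
  have key : 2 * J * (∏ j ∈ S, (2 * M + (j : ℤ)) - J)
      = M ^ 2 * (2 * (B + T - 3 * T + 2 * A₁ * A₁)) + M ^ 3 * (16 * J * E) := by
    rw [hexp]
    linear_combination (2 * (M : ℤ)) * hpair + (4 * (M : ℤ) ^ 2) * hA₂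
  have hdvd : (p : ℤ) ^ (3 * c) ∣ 2 * J * (∏ j ∈ S, (2 * M + (j : ℤ)) - J) := by
    rw [key, show 3 * c = 2 * c + c by ring, pow_add, pow_mul']
    refine dvd_add (mul_dvd_mul (pow_dvd_pow_of_dvd hM' 2) ?_) ?_
    · exact dvd_mul_of_dvd_right (dvd_add (dvd_sub hB hT) (hA₁.mul_left _)) 2
    · rw [← pow_succ]
      exact (pow_dvd_pow_of_dvd hM' 3).mul_right _
  exact ((isCoprime_prime_pow_two hp hp2 _).mul_right
    (isCoprime_pow_prod_nonMultiples hp _)).dvd_of_dvd_mul_left hdvd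

end PrimePowerCongruences

theorem pow_dvd_choose_sub_choose {p c N : ℕ} (hp : p.Prime) (hp2 : p ≠ 2) (hc : c ≠ 0)
    (hM : p ^ c ∣ N * p) :
    (p : ℤ) ^ (3 * c)
      ∣ ((3 * (N * p) - 1).choose (N * p - 1) : ℤ) - ((3 * N - 1).choose (N - 1) : ℤ) := by
  rcases Nat.eq_zero_or_pos N with rfl | hN
  · simp
  have hMT := pow_dvd_prod_add_two_mul_sub_prod hp hc hM hp2
  set M := N * p
  have hid : (3 * M - 1).choose (M - 1) * ∏ j ∈ nonMultiples p M, j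
      = (3 * N - 1).choose (N - 1) * ∏ j ∈ nonMultiples p M, (2 * M + j) := by
    have h := choose_three_mul_mul_prod_nonMultiples hp.pos N
    rw [choose_three_mul_eq (Nat.mul_pos hN hp.pos).ne', choose_three_mul_eq hN.ne', mul_assoc,
      mul_assoc] at h
    exact Nat.eq_of_mul_eq_mul_left three_pos h
  have hid' := congrArg (Nat.cast : ℕ → ℤ) hid
  push_cast at hid'
  refine (isCoprime_pow_prod_nonMultiples (M := M) hp _).dvd_of_dvd_mul_right ?_
  rw [sub_mul, hid', ← mul_sub]
  exact hMT.mul_left _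

theorem pow_factorization_dvd_sum_moebius_mul_choose {r p : ℕ} (hr : r ≠ 0) (hodd : Odd r)
    (hp : p.Prime) :
    (p : ℤ) ^ (3 * r.factorization p)
      ∣ ∑ d ∈ r.divisors, moebius (r / d) * ((3 * d - 1).choose (d - 1) : ℤ) := by
  by_cases hpr : p ∣ r
  swap
  · simp [Nat.factorization_eq_zero_of_not_dvd hpr]
  have hp2 : p ≠ 2 := by
    rintro rfl
    exact Nat.not_even_iff_odd.2 hodd (even_iff_two_dvd.2 hpr)
  set a := r.factorization p
  have ha : a ≠ 0 := (hp.factorization_pos_of_dvd hr hpr).ne'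
  have hr' : p ^ a * (r / p ^ a) = r := Nat.ordProj_mul_ordCompl_eq_self r p
  rw [← hr']
  refine dvd_sum_moebius_mul_of_dvd_sub hp ha (Nat.not_dvd_ordCompl hp hr) fun e _ => ?_
  have hpa : p ^ (a - 1) * e * p = p ^ a * e := by
    rw [mul_right_comm, ← pow_succ, Nat.sub_add_cancel (Nat.one_le_iff_ne_zero.2 ha)]
  have := pow_dvd_choose_sub_choose hp hp2 ha (hpa ▸ dvd_mul_right _ e)
  rwa [hpa] at this

open ArithmeticFunction in
theorem stmt_2 (r : ℕ) (hr : 0 < r) (hodd : Odd r) :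
    ((r : ℤ))^3 ∣ ∑ d ∈ r.divisors, moebius (r / d) * (Nat.choose (3*d - 1) (d - 1) : ℤ) := by
  rw [← Nat.cast_pow, Int.natCast_dvd, Nat.dvd_iff_prime_pow_dvd_dvd]
  intro p k hp hk
  have hk' : k ≤ 3 * r.factorization p := by
    rw [hp.pow_dvd_iff_le_factorization (pow_ne_zero 3 hr.ne'), Nat.factorization_pow] at hk
    simpa using hk
  rw [← Int.natCast_dvd, Nat.cast_pow]
  exact (pow_dvd_pow _ hk').trans (pow_factorization_dvd_sum_moebius_mul_choose hr.ne' hodd hp)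
end

section
/- If d is a positive integer whose binary expansion is not well-spaced (i.e., it contains two consecutive 1's), then b(3d) < 2 b(d) - 1, where b denotes the binary digit sum. -/
/-- `b t` is the number of ones in the binary expansion of `t`. -/
def b (t : ℕ) : ℕ := (Nat.digits 2 t).sum

/-- A positive integer is binarily well-spaced if its binary expansion has
no two consecutive ones. -/
def WellSpaced (d : ℕ) : Prop := ∀ i, ¬ (d.testBit i ∧ d.testBit (i + 1))

lemma b_def (n : ℕ) (h : 0 < n) : b n = n % 2 + b (n / 2) := by
  unfold b
  rw [Nat.digits_def' (by norm_num : (1:ℕ) < 2) h, List.sum_cons]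

lemma b_two_mul (n : ℕ) : b (2*n) = b n := by
  rcases n.eq_zero_or_pos with h | h
  · simp [h]
  · rw [b_def _ (by positivity)]
    have h1 : 2*n % 2 = 0 := by omega
    have h2 : 2*n / 2 = n := by omega
    rw [h1, h2]; omega

lemma b_two_mul_add_one (n : ℕ) : b (2*n+1) = b n + 1 := by
  rw [b_def _ (by positivity)]
  have h1 : (2*n+1) % 2 = 1 := by omega
  have h2 : (2*n+1) / 2 = n := by omega
  rw [h1, h2]; omega

lemma b_zero : b 0 = 0 := by simp [b]

lemma b_one : b 1 = 1 := by
  have := b_two_mul_add_one 0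
  simpa [b_zero] using this

lemma b_two : b 2 = 1 := by
  have := b_two_mul 1
  rw [b_one] at this
  simpa using this

lemma pqr : ∀ d : ℕ, b (3*d) ≤ 2 * b d ∧ b (3*d+1) ≤ 2*b d + 1 ∧ b (3*d+2) ≤ 2*b d + 1 := by
  intro d
  induction d using Nat.strong_induction_on with
  | _ d ih =>
    rcases d.eq_zero_or_pos with rfl | hd
    · simp [b_one, b_two, b_zero]
    rcases Nat.even_or_odd d with ⟨e, he⟩ | ⟨e, he⟩
    · have hde : d = 2*e := by omega
      subst hde
      have he' : e < 2*e := by omega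
      obtain ⟨P, Q, R⟩ := ih e he'
      refine ⟨?_, ?_, ?_⟩
      · have h1 : 3*(2*e) = 2*(3*e) := by ring
        rw [h1, b_two_mul, b_two_mul]; omega
      · have h1 : 3*(2*e)+1 = 2*(3*e)+1 := by ring
        rw [h1, b_two_mul_add_one, b_two_mul]; omega
      · have h1 : 3*(2*e)+2 = 2*(3*e+1) := by ring
        rw [h1, b_two_mul, b_two_mul]; omega
    · have hde : d = 2*e+1 := by omega
      subst hde
      have he' : e < 2*e+1 := by omega
      obtain ⟨P, Q, R⟩ := ih e he'
      rw [b_two_mul_add_one]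
      refine ⟨?_, ?_, ?_⟩
      · have h1 : 3*(2*e+1) = 2*(3*e+1)+1 := by ring
        rw [h1, b_two_mul_add_one]; omega
      · have h1 : 3*(2*e+1)+1 = 2*(3*e+2) := by ring
        rw [h1, b_two_mul]; omega
      · have h1 : 3*(2*e+1)+2 = 2*(3*e+2)+1 := by ring
        rw [h1, b_two_mul_add_one]; omega

lemma testBit_pos {n i : ℕ} (h : n.testBit i = true) : 0 < n := by
  rcases n.eq_zero_or_pos with rfl | h'
  · rw [Nat.zero_testBit] at h; exact absurd h (by simp)
  · exact h'

lemma slem : ∀ d : ℕ, ¬ WellSpaced d → b (3*d) + 2 ≤ 2 * b d := by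
  intro d
  induction d using Nat.strong_induction_on with
  | _ d ih =>
    intro hws
    rw [WellSpaced] at hws
    push_neg at hws
    obtain ⟨i, h1, h2⟩ := hws
    have hd : 0 < d := testBit_pos h1
    rcases Nat.even_or_odd d with ⟨e, he⟩ | ⟨e, he⟩
    · -- d = 2e even
      have hde : d = 2*e := by omega
      subst hde
      have hdiv : 2*e/2 = e := by omega
      -- i cannot be 0 since bit 0 of 2e is false
      rcases i with _ | j
      · rw [Nat.testBit_zero] at h1
        simp only [decide_eq_true_eq] at h1; omega
      · rw [Nat.testBit_add_one, hdiv] at h1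
        rw [Nat.testBit_add_one, hdiv] at h2
        have hnws : ¬ WellSpaced e := fun hw => hw j ⟨h1, h2⟩
        have he0 : 0 < e := testBit_pos h1
        have := ih e (by omega) hnws
        have h3 : 3*(2*e) = 2*(3*e) := by ring
        rw [h3, b_two_mul, b_two_mul]
        exact this
    · -- d = 2e+1 odd
      have hde : d = 2*e+1 := by omega
      subst hde
      have hdiv : (2*e+1)/2 = e := by omega
      rcases Nat.even_or_odd e with ⟨f, hf⟩ | ⟨f, hf⟩
      · -- e even: d = 4f+1, witness must be at j+2
        have hef : e = 2*f := by omega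
        subst hef
        have hdiv2 : 2*f/2 = f := by omega
        rcases i with _ | _ | j
        · -- i = 0: bit 1 of d is bit 0 of e = false
          rw [Nat.testBit_add_one, hdiv, Nat.testBit_zero] at h2
          simp only [decide_eq_true_eq] at h2; omega
        · -- i = 1: bit 1 false
          rw [Nat.testBit_add_one, hdiv, Nat.testBit_zero] at h1
          simp only [decide_eq_true_eq] at h1; omega
        · rw [Nat.testBit_add_one, hdiv, Nat.testBit_add_one, hdiv2] at h1
          rw [Nat.testBit_add_one, hdiv, Nat.testBit_add_one, hdiv2] at h2
          have hnws : ¬ WellSpaced f := fun hw => hw j ⟨h1, h2⟩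
          have hf0 : 0 < f := testBit_pos h1
          have hih := ih f (by omega) hnws
          have h3 : 3*(2*(2*f)+1) = 2*(2*(3*f)+1)+1 := by ring
          rw [h3, b_two_mul_add_one, b_two_mul_add_one, b_two_mul_add_one,
            b_two_mul]
          omega
      · -- e odd: d = 4f+3, automatically not well-spaced; use pqr
        have hef : e = 2*f+1 := by omega
        subst hef
        have hR := (pqr f).2.2
        have h3 : 3*(2*(2*f+1)+1) = 2*(2*(3*f+2))+1 := by ring
        rw [h3, b_two_mul_add_one, b_two_mul, b_two_mul_add_one,
          b_two_mul_add_one]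
        omega

theorem stmt_14 (d : ℕ) (hd : 0 < d) (hws : ¬ WellSpaced d) :
    (b (3*d) : ℤ) < 2 * b d - 1 := by
  have h := slem d hws
  omega
end
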